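/- For all complex q with |q| < 1, the sum over n ≥ 0 of (-1)^n q^{n(n+1)/2} / (-q;q)_n equals the sum over j ≥ 0 of q^{j(3j+1)/2} (1 - q^{2j+1}). -/

import Mathlib

noncomputable def qPoch (a q : ℂ) (n : ℕ) : ℂ := ∏ i ∈ Finset.range n, (1 - a * q ^ i)

noncomputable def qPochInf (a q : ℂ) : ℂ := ∏' i : ℕ, (1 - a * q ^ i)

/-!
Put `B_j = ∑ₙ (-1)ⁿ q^(n(n+1)/2 + 2jn) / (-q^(j+1); q)ₙ` (`shiftedSum q j`), so that `B_0` is the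
left-hand side.
The ratio of consecutive terms of `B_j` is `-q^(n+2j+1) / (1 + q^(n+j+1))`, and shifting `j` to
`j + 1` only removes the first factor of the q-Pochhammer symbol; together these make
`B_j - 1 - q^(3j+2) B_(j+1)` a telescoping series with sum `-q^(2j+1)`.  Iterating
`B_j = 1 - q^(2j+1) + q^(3j+2) B_(j+1)` expresses `B_0` as the `J`-th partial sum of the right-hand
side plus `q^(J(3J+1)/2) B_J`, and `B_J` is bounded uniformly in `J`.
-/

open Filter Finset Topology

theorem qPoch_succ (a q : ℂ) (n : ℕ) : qPoch a q (n + 1) = qPoch a q n * (1 - a * q ^ n) :=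
  prod_range_succ _ _

theorem qPoch_succ' (a q : ℂ) (n : ℕ) : qPoch a q (n + 1) = (1 - a) * qPoch (a * q) q n := by
  rw [qPoch, prod_range_succ', mul_comm, pow_zero, mul_one, qPoch]
  congr 1
  exact prod_congr rfl fun i _ => by ring

theorem one_sub_norm_pow_le_norm_qPoch {a q : ℂ} (ha : ‖a‖ ≤ 1) (hq : ‖q‖ ≤ 1) (n : ℕ) :
    (1 - ‖a‖) ^ n ≤ ‖qPoch a q n‖ := by
  rw [qPoch, norm_prod, pow_eq_prod_const]
  refine prod_le_prod (fun _ _ => sub_nonneg.2 ha) fun i _ => ?_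
  calc 1 - ‖a‖ ≤ 1 - ‖a * q ^ i‖ := by
        rw [norm_mul, norm_pow]
        gcongr
        exact mul_le_of_le_one_right (norm_nonneg a) (pow_le_one₀ (norm_nonneg q) hq)
    _ ≤ ‖1 - a * q ^ i‖ := by simpa using norm_sub_norm_le (1 : ℂ) (a * q ^ i)

theorem one_sub_ne_zero_of_norm_lt_one {z : ℂ} (hz : ‖z‖ < 1) : 1 - z ≠ 0 := fun h => by
  rw [sub_eq_zero] at h
  simp [← h] at hz

theorem qPoch_ne_zero {a q : ℂ} (ha : ‖a‖ < 1) (hq : ‖q‖ ≤ 1) (n : ℕ) : qPoch a q n ≠ 0 :=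
  norm_pos_iff.mp ((pow_pos (sub_pos.2 ha) n).trans_le
    (one_sub_norm_pow_le_norm_qPoch ha.le hq n))

theorem HasSum.hasSum_succ_sub {G : Type*} [AddCommGroup G] [TopologicalSpace G]
    [IsTopologicalAddGroup G] {f : ℕ → G} {a : G} (hf : HasSum f a) :
    HasSum (fun n => f (n + 1) - f n) (-f 0) := by
  simpa using ((hasSum_nat_add_iff' 1).2 hf).sub hf

namespace PentagonalQSeries

theorem triangle_succ (n : ℕ) : (n + 1) * (n + 1 + 1) / 2 = n * (n + 1) / 2 + (n + 1) := by
  rw [show (n + 1) * (n + 1 + 1) = n * (n + 1) + 2 * (n + 1) by ring,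
    Nat.add_mul_div_left _ _ two_pos]

theorem pentagonal_succ (j : ℕ) :
    (j + 1) * (3 * (j + 1) + 1) / 2 = j * (3 * j + 1) / 2 + (3 * j + 2) := by
  rw [show (j + 1) * (3 * (j + 1) + 1) = j * (3 * j + 1) + 2 * (3 * j + 2) by ring,
    Nat.add_mul_div_left _ _ two_pos]

theorem le_pentagonal (j : ℕ) : j ≤ j * (3 * j + 1) / 2 := by
  rw [Nat.le_div_iff_mul_le two_pos]
  rcases j with _ | j
  · rfl
  · exact Nat.mul_le_mul_left _ (by omega)

theorem summable_pow_triangle_div_pow {r c : ℝ} (hr₀ : 0 ≤ r) (hr : r < 1) (hc : 0 < c) :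
    Summable fun n : ℕ => r ^ (n * (n + 1) / 2) / c ^ n := by
  refine summable_of_ratio_norm_eventually_le (r := 1 / 2) (by norm_num) ?_
  have hratio : Tendsto (fun n : ℕ => r ^ (n + 1) / c) atTop (𝓝 0) := by
    simpa using ((tendsto_pow_atTop_nhds_zero_of_lt_one hr₀ hr).comp
      (tendsto_add_atTop_nat 1)).div_const c
  filter_upwards [hratio.eventually_lt_const (by norm_num : (0 : ℝ) < 1 / 2)] with n hn
  rw [Real.norm_of_nonneg (by positivity), Real.norm_of_nonneg (by positivity), triangle_succ,
    pow_add, pow_succ]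
  calc r ^ (n * (n + 1) / 2) * r ^ (n + 1) / (c ^ n * c)
      = r ^ (n + 1) / c * (r ^ (n * (n + 1) / 2) / c ^ n) := by field_simp
    _ ≤ 1 / 2 * (r ^ (n * (n + 1) / 2) / c ^ n) := by gcongr

noncomputable def shiftedTerm (q : ℂ) (j n : ℕ) : ℂ :=
  (-1) ^ n * q ^ (n * (n + 1) / 2 + 2 * j * n) / qPoch (-q ^ (j + 1)) q n

noncomputable def shiftedSum (q : ℂ) (j : ℕ) : ℂ := ∑' n, shiftedTerm q j n

variable {q : ℂ}

theorem norm_neg_pow_succ_le (hq : ‖q‖ < 1) (k : ℕ) : ‖-q ^ (k + 1)‖ ≤ ‖q‖ := by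
  rw [norm_neg, norm_pow]
  exact pow_le_of_le_one (norm_nonneg q) hq.le k.succ_ne_zero

theorem shiftedTerm_zero (j : ℕ) : shiftedTerm q j 0 = 1 := by
  simp [shiftedTerm, qPoch]

theorem shiftedTerm_succ_mul (hq : ‖q‖ < 1) (j n : ℕ) :
    shiftedTerm q j (n + 1) * (1 + q ^ (n + j + 1))
      = -(q ^ (n + 2 * j + 1) * shiftedTerm q j n) := by
  have hc : 1 - -q ^ (j + 1) * q ^ n = 1 + q ^ (n + j + 1) := by ring
  have hc0 : 1 + q ^ (n + j + 1) ≠ 0 := by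
    simpa using one_sub_ne_zero_of_norm_lt_one ((norm_neg_pow_succ_le hq (n + j)).trans_lt hq)
  have hP := qPoch_ne_zero ((norm_neg_pow_succ_le hq j).trans_lt hq) hq.le n
  rw [shiftedTerm, shiftedTerm, qPoch_succ, hc, triangle_succ]
  field_simp
  ring

theorem shiftedTerm_shift (hq : ‖q‖ < 1) (j n : ℕ) :
    q ^ (3 * j + 2) * shiftedTerm q (j + 1) n
      = -((1 + q ^ (j + 1)) * q ^ (n + j + 1) * shiftedTerm q j (n + 1)) := by
  have hc0 : 1 + q ^ (j + 1) ≠ 0 := by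
    simpa using one_sub_ne_zero_of_norm_lt_one ((norm_neg_pow_succ_le hq j).trans_lt hq)
  have hP := qPoch_ne_zero ((norm_neg_pow_succ_le hq (j + 1)).trans_lt hq) hq.le n
  rw [shiftedTerm, shiftedTerm, qPoch_succ', triangle_succ, sub_neg_eq_add,
    show -q ^ (j + 1) * q = -q ^ (j + 1 + 1) by ring]
  field_simp
  ring

theorem norm_shiftedTerm_le (hq : ‖q‖ < 1) (j n : ℕ) :
    ‖shiftedTerm q j n‖ ≤ ‖q‖ ^ (n * (n + 1) / 2) / (1 - ‖q‖) ^ n := by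
  rw [shiftedTerm, norm_div, norm_mul, norm_pow, norm_neg, norm_one, one_pow, one_mul, norm_pow]
  have ha := norm_neg_pow_succ_le hq j
  gcongr ?_ / ?_
  · exact pow_le_pow_of_le_one (norm_nonneg q) hq.le (Nat.le_add_right _ _)
  · exact (pow_le_pow_left₀ (by linarith) (by linarith) n).trans
      (one_sub_norm_pow_le_norm_qPoch (ha.trans hq.le) hq.le n)

theorem summable_shiftedTerm (hq : ‖q‖ < 1) (j : ℕ) : Summable (shiftedTerm q j) :=
  .of_norm_bounded (summable_pow_triangle_div_pow (norm_nonneg q) hq (sub_pos.2 hq))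
    (norm_shiftedTerm_le hq j)

theorem norm_shiftedSum_le (hq : ‖q‖ < 1) (j : ℕ) :
    ‖shiftedSum q j‖ ≤ ∑' n : ℕ, ‖q‖ ^ (n * (n + 1) / 2) / (1 - ‖q‖) ^ n :=
  tsum_of_norm_bounded
    (summable_pow_triangle_div_pow (norm_nonneg q) hq (sub_pos.2 hq)).hasSum
    (norm_shiftedTerm_le hq j)

theorem summable_pow_mul_shiftedTerm (hq : ‖q‖ < 1) (j k : ℕ) :
    Summable fun n => q ^ (n + k) * shiftedTerm q j n := by
  refine .of_norm_bounded (summable_pow_triangle_div_pow (norm_nonneg q) hq (sub_pos.2 hq))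
    fun n => ?_
  rw [norm_mul, norm_pow]
  exact (mul_le_of_le_one_left (norm_nonneg _) (pow_le_one₀ (norm_nonneg q) hq.le)).trans
    (norm_shiftedTerm_le hq j n)

theorem shiftedSum_eq (hq : ‖q‖ < 1) (j : ℕ) :
    shiftedSum q j = 1 - q ^ (2 * j + 1) + q ^ (3 * j + 2) * shiftedSum q (j + 1) := by
  have hTail : HasSum (fun n => shiftedTerm q j (n + 1)) (shiftedSum q j - 1) := by
    simpa [shiftedSum, shiftedTerm_zero] using
      (hasSum_nat_add_iff' 1).2 (summable_shiftedTerm hq j).hasSum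
  have hShift : HasSum (fun n => (1 + q ^ (j + 1)) * q ^ (n + j + 1) * shiftedTerm q j (n + 1))
      (-(q ^ (3 * j + 2) * shiftedSum q (j + 1))) := by
    simpa only [shiftedSum, shiftedTerm_shift hq, neg_neg] using
      ((summable_shiftedTerm hq (j + 1)).hasSum.mul_left (q ^ (3 * j + 2))).neg
  set g : ℕ → ℂ := fun n => q ^ (n + (2 * j + 1)) * shiftedTerm q j n
  have hg : HasSum (fun n => g (n + 1) - g n) (-q ^ (2 * j + 1)) := by
    simpa [g, shiftedTerm_zero] using (summable_pow_mul_shiftedTerm hq j _).hasSum.hasSum_succ_sub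
  have hTelescope : HasSum (fun n => g (n + 1) - g n)
      (shiftedSum q j - 1 - q ^ (3 * j + 2) * shiftedSum q (j + 1)) := by
    convert hTail.add hShift using 1
    · -- with `t = shiftedTerm q j`:
      -- `t (n+1) (1 + q^(n+j+1)) = -g n` and `t (n+1) q^(n+2j+2) = g (n+1)`
      ext n
      linear_combination (-1 : ℂ) * shiftedTerm_succ_mul hq j n
    · ring
  linear_combination -hg.unique hTelescope

theorem shiftedSum_zero_eq (hq : ‖q‖ < 1) (J : ℕ) :
    shiftedSum q 0 = ∑ j ∈ range J, q ^ (j * (3 * j + 1) / 2) * (1 - q ^ (2 * j + 1))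
      + q ^ (J * (3 * J + 1) / 2) * shiftedSum q J := by
  induction J with
  | zero => simp
  | succ J ih =>
    rw [ih, sum_range_succ, shiftedSum_eq hq J, pentagonal_succ, pow_add]
    ring

theorem tendsto_pow_pentagonal_mul_shiftedSum (hq : ‖q‖ < 1) :
    Tendsto (fun J => q ^ (J * (3 * J + 1) / 2) * shiftedSum q J) atTop (𝓝 0) := by
  set M := ∑' n : ℕ, ‖q‖ ^ (n * (n + 1) / 2) / (1 - ‖q‖) ^ n
  refine squeeze_zero_norm (a := fun J => ‖q‖ ^ J * M) (fun J => ?_) ?_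
  · rw [norm_mul, norm_pow]
    exact mul_le_mul (pow_le_pow_of_le_one (norm_nonneg q) hq.le (le_pentagonal J))
      (norm_shiftedSum_le hq J) (norm_nonneg _) (pow_nonneg (norm_nonneg q) J)
  · simpa using (tendsto_pow_atTop_nhds_zero_of_lt_one (norm_nonneg q) hq).mul_const M

theorem summable_pentagonal (hq : ‖q‖ < 1) :
    Summable fun j : ℕ => q ^ (j * (3 * j + 1) / 2) * (1 - q ^ (2 * j + 1)) := by
  refine .of_norm_bounded ((summable_geometric_of_lt_one (norm_nonneg q) hq).mul_left 2)
    fun j => ?_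
  have hfactor : ‖1 - q ^ (2 * j + 1)‖ ≤ 2 := by
    calc ‖1 - q ^ (2 * j + 1)‖ ≤ ‖(1 : ℂ)‖ + ‖q ^ (2 * j + 1)‖ := norm_sub_le _ _
      _ ≤ 2 := by
        rw [norm_one, norm_pow]
        linarith [pow_le_one₀ (n := 2 * j + 1) (norm_nonneg q) hq.le]
  rw [norm_mul, norm_pow, mul_comm (2 : ℝ)]
  exact mul_le_mul (pow_le_pow_of_le_one (norm_nonneg q) hq.le (le_pentagonal j)) hfactor
    (norm_nonneg _) (pow_nonneg (norm_nonneg q) j)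

theorem hasSum_pentagonal (hq : ‖q‖ < 1) :
    HasSum (fun j : ℕ => q ^ (j * (3 * j + 1) / 2) * (1 - q ^ (2 * j + 1))) (shiftedSum q 0) := by
  refine (summable_pentagonal hq).hasSum_iff_tendsto_nat.2 ?_
  simpa using (tendsto_const_nhds (x := shiftedSum q 0)).sub
    (tendsto_pow_pentagonal_mul_shiftedSum hq) |>.congr fun J => by
      rw [shiftedSum_zero_eq hq J, add_sub_cancel_right]

end PentagonalQSeries

theorem stmt_9 (q : ℂ) (hq : ‖q‖ < 1) :
    ∑' n : ℕ, (-1) ^ n * q ^ (n * (n + 1) / 2) / qPoch (-q) q n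
      = ∑' j : ℕ, q ^ (j * (3 * j + 1) / 2) * (1 - q ^ (2 * j + 1)) := by
  have hlhs : ∑' n : ℕ, (-1) ^ n * q ^ (n * (n + 1) / 2) / qPoch (-q) q n
      = PentagonalQSeries.shiftedSum q 0 := by
    simp [PentagonalQSeries.shiftedSum, PentagonalQSeries.shiftedTerm]
  rw [hlhs, (PentagonalQSeries.hasSum_pentagonal hq).tsum_eq]
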